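/- arXiv:2006.11219 — 7 statements merged into one kernel-verified Lean document; each statement's English description precedes it below -/
import Mathlib

section
/- The linear map γ from the Onsager algebra O (with basis A_m (m ∈ ℤ), G_l (l ∈ ℕ+) and brackets [A_l, A_m] = 2G_{l-m} for l > m, [G_l, A_m] = A_{m+l} - A_{m-l}, [G_l, G_m] = 0) to the loop algebra sl₂ ⊗ ℂ[t,t^{-1}], defined by γ(A_m) = x⁺ ⊗ t^m + x⁻ ⊗ t^{-m} and γ(G_l) = (1/2) h ⊗ (t^l - t^{-l}), is an injective Lie algebra homomorphism. -/
open LaurentPolynomial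

noncomputable section

/-- The (enlarged) loop algebra: `2×2` matrices over `ℂ[t,t⁻¹]`, with the commutator
Lie bracket.  `sl₂ ⊗ ℂ[t,t⁻¹]` is its trace-zero part. -/
abbrev LoopM : Type := Matrix (Fin 2) (Fin 2) (LaurentPolynomial ℂ)

/-- `x⁺` in the loop algebra. -/
def xP : LoopM := !![0, 1; 0, 0]

/-- `x⁻` in the loop algebra. -/
def xM : LoopM := !![0, 0; 1, 0]

/-- `h` in the loop algebra. -/
def hS : LoopM := !![1, 0; 0, -1]

/-- `γ(A_m) = x⁺ ⊗ t^m + x⁻ ⊗ t^{-m}`. -/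
def Amat (m : ℤ) : LoopM := (T m : LaurentPolynomial ℂ) • xP + (T (-m) : LaurentPolynomial ℂ) • xM

/-- `γ(G_l) = (1/2) h ⊗ (t^l - t^{-l})`. -/
def Gmat (l : ℕ+) : LoopM :=
  ((1 / 2 : ℂ)) • ((T ((l : ℕ) : ℤ) - T (-((l : ℕ) : ℤ)) : LaurentPolynomial ℂ) • hS)

/-!
The brackets of `γ(A_m)` and `γ(G_l)` follow from the `sl₂` relations `[x⁺, x⁻] = h`,
`[h, x^±] = ±2 x^±` and bilinearity of the bracket over `ℂ[t,t⁻¹]`; as both `γ ⁅x, y⁆` and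
`⁅γ x, γ y⁆` are bilinear in `(x, y)`, checking the Onsager relations on basis vectors suffices.
For injectivity, the coefficient of `t^m` in the upper right entry detects `γ(A_m)` alone, and
twice the coefficient of `t^l` (`l > 0`) in the upper left entry detects `γ(G_l)` alone, so the
images of the basis are linearly independent.
-/

section

attribute [local instance] LieRing.ofAssociativeRing

theorem Module.Basis.map_lie_of_map_lie_basis {ι R L L' : Type*} [CommRing R]
    [LieRing L] [LieAlgebra R L] [LieRing L'] [LieAlgebra R L'] (b : Basis ι R L)
    (f : L →ₗ[R] L') (h : ∀ i j, f ⁅b i, b j⁆ = ⁅f (b i), f (b j)⁆) (x y : L) :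
    f ⁅x, y⁆ = ⁅f x, f y⁆ := by
  have : (LieModule.toEnd R L L).toLinearMap.compr₂ f =
      (LieModule.toEnd R L' L').toLinearMap.compl₁₂ f f :=
    LinearMap.ext_basis b b h
  exact LinearMap.congr_fun₂ this x y

lemma lie_xP_xM : ⁅xP, xM⁆ = hS := by
  ext i j; fin_cases i <;> fin_cases j <;> simp [Ring.lie_def, xP, xM, hS]

lemma lie_hS_xP : ⁅hS, xP⁆ = (2 : ℂ) • xP := by
  ext i j; fin_cases i <;> fin_cases j <;> simp [Ring.lie_def, xP, hS]; ring

lemma lie_hS_xM : ⁅hS, xM⁆ = -(2 : ℂ) • xM := by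
  ext i j; fin_cases i <;> fin_cases j <;> simp [Ring.lie_def, xM, hS]; ring

lemma lie_Amat_Amat (l m : ℤ) : ⁅Amat l, Amat m⁆ = (T (l - m) - T (m - l) : ℂ[T;T⁻¹]) • hS := by
  have lie_xM_xP : ⁅xM, xP⁆ = -hS := by rw [← lie_skew, lie_xP_xM]
  simp only [Amat, add_lie, lie_add, smul_lie, lie_smul, lie_self, lie_xP_xM, lie_xM_xP]
  rw [T_sub, T_sub]
  module

lemma two_smul_Gmat (l : ℕ+) :
    (2 : ℕ) • Gmat l = (T ((l : ℕ) : ℤ) - T (-((l : ℕ) : ℤ)) : ℂ[T;T⁻¹]) • hS := by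
  rw [Gmat, ← Nat.cast_smul_eq_nsmul ℂ, smul_smul]; norm_num

lemma lie_Amat_Amat_of_lt {l m : ℤ} (h : m < l) :
    ⁅Amat l, Amat m⁆ = 2 • Gmat ⟨(l - m).toNat, Int.lt_toNat.mpr (sub_pos.mpr h)⟩ := by
  rw [lie_Amat_Amat, two_smul_Gmat ⟨(l - m).toNat, by omega⟩, PNat.mk_coe,
    Int.toNat_of_nonneg (by omega), neg_sub]

lemma lie_Gmat_Amat (l : ℕ+) (m : ℤ) :
    ⁅Gmat l, Amat m⁆ = Amat (m + (l : ℕ)) - Amat (m - (l : ℕ)) := by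
  have half : algebraMap ℂ ℂ[T;T⁻¹] (1 / 2) * algebraMap ℂ ℂ[T;T⁻¹] 2 = 1 := by
    rw [← map_mul]; norm_num
  simp only [Gmat, Amat, lie_add, smul_lie, lie_smul, lie_hS_xP, lie_hS_xM]
  simp only [sub_eq_add_neg, neg_add, neg_neg, T_add]
  match_scalars
  · linear_combination (T m * (T ((l : ℕ) : ℤ) - T (-((l : ℕ) : ℤ))) : ℂ[T;T⁻¹]) * half
  · linear_combination (T (-m) * (T (-((l : ℕ) : ℤ)) - T ((l : ℕ) : ℤ)) : ℂ[T;T⁻¹]) * half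

lemma lie_Gmat_Gmat (l m : ℕ+) : ⁅Gmat l, Gmat m⁆ = 0 := by
  simp only [Gmat, smul_lie, lie_smul, lie_self, smul_zero]

end

def entryCoeff (i j : Fin 2) (n : ℤ) : Module.Dual ℂ LoopM :=
  Finsupp.lapply n ∘ₗ (AddMonoidAlgebra.coeffLinearEquiv ℂ).toLinearMap ∘ₗ
    Matrix.entryLinearMap ℂ _ i j

@[simp]
lemma entryCoeff_apply (i j : Fin 2) (n : ℤ) (M : LoopM) : entryCoeff i j n M = (M i j).coeff n :=
  rfl

lemma linearIndependent_Amat_Gmat : LinearIndependent ℂ (Sum.elim Amat Gmat) := by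
  refine LinearIndependent.of_pairwise_dual_eq_zero_one _
    (Sum.elim (fun m ↦ entryCoeff 0 1 m) (fun l ↦ 2 • entryCoeff 0 0 ((l : ℕ) : ℤ))) ?_ ?_
  · rintro (m | l) (m' | l') hne <;> simp_all [Amat, Gmat, xP, xM, hS, eq_comm]
  · rintro (m | l) <;> simp [Amat, Gmat, xP, xM, hS]

/-- The linear map `γ` from the Onsager algebra `O` (given by its basis `{A_m, G_l}` and
the Onsager bracket relations) to the loop algebra `sl₂ ⊗ ℂ[t,t⁻¹]`, determined by
`γ(A_m) = x⁺ ⊗ t^m + x⁻ ⊗ t^{-m}` and `γ(G_l) = (1/2) h ⊗ (t^l - t^{-l})`, is an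
injective Lie algebra homomorphism. -/
theorem gamma_injective_lieHom (O : Type*) [LieRing O] [LieAlgebra ℂ O]
    (A : ℤ → O) (G : ℕ+ → O)
    (b : Module.Basis (ℤ ⊕ ℕ+) ℂ O)
    (hbA : ∀ m : ℤ, b (Sum.inl m) = A m)
    (hbG : ∀ l : ℕ+, b (Sum.inr l) = G l)
    (hAA : ∀ l m : ℤ, (hlm : m < l) → ⁅A l, A m⁆ = 2 • G ⟨(l - m).toNat, by omega⟩)
    (hGA : ∀ (l : ℕ+) (m : ℤ), ⁅G l, A m⁆ = A (m + (l : ℕ)) - A (m - (l : ℕ)))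
    (hGG : ∀ l m : ℕ+, ⁅G l, G m⁆ = 0) :
    Function.Injective (b.constr ℂ (Sum.elim Amat Gmat)) ∧
      ∀ x y : O, b.constr ℂ (Sum.elim Amat Gmat) ⁅x, y⁆ =
        ⁅b.constr ℂ (Sum.elim Amat Gmat) x, b.constr ℂ (Sum.elim Amat Gmat) y⁆ := by
  let _ : LieRing LoopM := LieRing.ofAssociativeRing
  set γ := b.constr ℂ (Sum.elim Amat Gmat)
  have hγA (m : ℤ) : γ (A m) = Amat m := by rw [← hbA, b.constr_basis]; rfl
  have hγG (l : ℕ+) : γ (G l) = Gmat l := by rw [← hbG, b.constr_basis]; rfl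
  have hγAA {l m : ℤ} (h : m < l) : γ ⁅A l, A m⁆ = ⁅Amat l, Amat m⁆ := by
    rw [hAA l m h, map_nsmul, hγG ⟨(l - m).toNat, by omega⟩, lie_Amat_Amat_of_lt h]
  refine ⟨b.injective_constr_of_linearIndependent linearIndependent_Amat_Gmat,
    b.map_lie_of_map_lie_basis γ ?_⟩
  rintro (l | l) (m | m)
  · simp only [hbA, hγA]
    rcases lt_trichotomy m l with h | rfl | h
    · exact hγAA h
    · rw [lie_self, lie_self, map_zero]
    · rw [← lie_skew, map_neg, hγAA h, lie_skew]
  · simp only [hbA, hbG, hγA, hγG]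
    rw [← lie_skew, map_neg, hGA, map_sub, hγA, hγA, ← lie_Gmat_Amat, lie_skew]
  · simp only [hbA, hbG, hγA, hγG, hGA, map_sub, lie_Gmat_Amat]
  · simp only [hbG, hγG, hGG, lie_Gmat_Gmat, map_zero]
end
end

section
/- Define recursively D^{Γ,+}_{0,1}(j,l) = x_j^{Γ,+} and D^{Γ,+}_{u,1}(j,l) = (1/2)[D^{Γ,+}_{u−1,1}(j,l), Λ^Γ_{j,l,1}] where Λ^Γ_{j,l,1} = −(h^Γ_{j+l} − h^Γ_{j−l}). Then for all u ∈ ℤ≥0 and j,l ∈ ℕ+: D^{Γ,+}_{u,1}(j,l) = Σ_{k=0}^{⌊(u−1)/2⌋} Σ_{i=0}^{u+1} (−1)^{k+i} C(u,k) C(u+1,i) x^{Γ,+}_{(u+1−2i)j+(u−2k)l} + [u even]·Σ_{i=0}^{u/2} (−1)^{u/2+i} C(u,u/2) C(u+1,i) x^{Γ,+}_{(u+1−2i)j}, where x^{Γ,+}_{−m} = −x^{Γ,+}_m and x^{Γ,+}_0 = 0. -/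
open Finset

noncomputable section

/- Setting: `A` plays the role of the universal enveloping algebra `U(O)` of the
Onsager algebra.  `X m = x_m^{Γ,+}`, `Y m = x_m^{Γ,-}`, `H m = h_m^Γ` (indexed by `ℤ`
via the conventions `x_{-m}^{Γ,±} = -x_m^{Γ,±}`, `x_0^{Γ,±} = 0`, `h_{-m}^Γ = h_m^Γ`),
and the Lie brackets of `O` are imposed as commutator relations. -/
variable {A : Type*} [Ring A] [Algebra ℂ A]

/-- `Λ^Γ_{j,l,1} = -(h^Γ_{j+l} - h^Γ_{j-l})`. -/
def Lam1 (H : ℤ → A) (j l : ℤ) : A := -(H (j + l) - H (j - l))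

/-- `D^{Γ,+}_{u,1}(j,l)`. -/
def Dp (X H : ℤ → A) (j l : ℤ) : ℕ → A
  | 0 => X j
  | u + 1 => ((1 : ℂ) / 2) • ⁅Dp X H j l u, Lam1 H j l⁆

/-- `D^{Γ,-}_{u,1}(j,l)`. -/
def Dm (Y H : ℤ → A) (j l : ℤ) : ℕ → A
  | 0 => Y l
  | u + 1 => (-((1 : ℂ) / 2)) • ⁅Dm Y H j l u, Lam1 H j l⁆

/-- `p^Γ_s(j,l) = [x_j^{Γ,+}, D^{Γ,-}_{s-1,1}(j,l)]`. -/
def pG (X Y H : ℤ → A) (j l : ℤ) (s : ℕ) : A := ⁅X j, Dm Y H j l (s - 1)⁆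

/-- `Λ^Γ_{j,l,n}`, via the recursion `n Λ_n = -∑_{i=1}^n p_i Λ_{n-i}` equivalent to the
exponential generating series definition. -/
def Lam (X Y H : ℤ → A) (j l : ℤ) : ℕ → A
  | 0 => 1
  | n + 1 =>
      (-(((n : ℂ) + 1)⁻¹)) •
        ∑ i ∈ Finset.range (n + 1), pG X Y H j l (i + 1) * Lam X Y H j l (n - i)
  decreasing_by omega

/-- `D^{Γ,+}_{u,v}(j,l)`. -/
def DvP (X H : ℤ → A) (j l : ℤ) : ℕ → ℕ → A
  | u, 0 => if u = 0 then 1 else 0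
  | u, v + 1 =>
      (((v : ℂ) + 1)⁻¹) • ∑ i ∈ Finset.range (u + 1), Dp X H j l i * DvP X H j l (u - i) v

/-- `D^{Γ,-}_{u,v}(j,l)`. -/
def DvM (Y H : ℤ → A) (j l : ℤ) : ℕ → ℕ → A
  | u, 0 => if u = 0 then 1 else 0
  | u, v + 1 =>
      (((v : ℂ) + 1)⁻¹) • ∑ i ∈ Finset.range (u + 1), Dm Y H j l i * DvM Y H j l (u - i) v

/-! Since `(1/2)[x_m, Λ_{j,l,1}] = x_{m+j+l} - x_{m-j+l} - x_{m+j-l} + x_{m-j-l}`, the map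
`y ↦ (1/2)[y, Λ_{j,l,1}]` acts on `m ↦ x_m` as the product `δ_l δ_j` of the commuting central
differences `δ_a f(m) = f(m + a) - f(m - a)`. Hence `D_{u,1}(j,l) = (δ_l^u δ_j^u x)(j)`, and the
binomial theorem expands `δ_l^u` and `δ_j^u`. As `x` is odd, `g = δ_j^u x` has parity
`(-1)^(u+1)`, so the terms `k` and `u - k` of the `δ_l`-expansion combine into
`(δ_j^(u+1) x)((u - 2k) l)`, which gives the coefficients `C(u+1, i)`. For even `u` the unpaired
term `k = u/2` is `g(j)`, half of the symmetric sum `(δ_j^(u+1) x)(0)`; folding that sum gives the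
range `i ≤ u/2`. -/

lemma neg_one_pow_mul_choose_sub {n k : ℕ} (hk : k ≤ n) :
    (-1 : ℤ) ^ (n - k) * n.choose (n - k) = (-1) ^ n * ((-1) ^ k * n.choose k) := by
  have hsign : (-1 : ℤ) ^ n = (-1) ^ (n - k) * (-1) ^ k := by
    rw [← pow_add, Nat.sub_add_cancel hk]
  rw [Nat.choose_symm hk, hsign, mul_assoc, ← mul_assoc ((-1 : ℤ) ^ k), ← pow_add,
    Even.neg_one_pow ⟨k, rfl⟩, one_mul]

lemma sum_range_succ_eq_sum_pairs {R : Type*} [AddCommMonoid R] (n : ℕ) (f : ℕ → R) :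
    ∑ k ∈ range (n + 1), f k =
      ∑ k ∈ range ((n + 1) / 2), (f k + f (n - k)) + if Even n then f (n / 2) else 0 := by
  induction n using Nat.twoStepInduction generalizing f with
  | zero => simp
  | one => simp [sum_range_succ]
  | more n ih _ =>
    have hends :
        ∑ k ∈ range (n + 3), f k = f 0 + ∑ k ∈ range (n + 1), f (k + 1) + f (n + 2) := by
      rw [sum_range_succ, sum_range_succ' f (n + 1)]
      abel
    have hinner : ∀ k ∈ range ((n + 1) / 2),
        f (k + 1) + f (n - k + 1) = f (k + 1) + f (n + 2 - (k + 1)) := fun k hk => by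
      rw [mem_range] at hk
      congr 2
      omega
    rw [hends, ih (fun k => f (k + 1)), show (n + 2 + 1) / 2 = (n + 1) / 2 + 1 by omega,
      sum_range_succ' _ ((n + 1) / 2), sum_congr rfl hinner]
    by_cases hn : Even n
    · rw [if_pos hn, if_pos (by simpa [Nat.even_add] using hn),
        show (n + 2) / 2 = n / 2 + 1 by omega]
      abel
    · rw [if_neg hn, if_neg (by simpa [Nat.even_add] using hn)]
      abel

lemma Module.End.pow_apply_eq_pow_apply_of_commute {R M : Type*} [Semiring R] [AddCommMonoid M]
    [Module R M] {S T : Module.End R M} (hST : Commute S T) {x : M} (hx : S x = T x) (n : ℕ) :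
    (S ^ n) x = (T ^ n) x := by
  induction n with
  | zero => rfl
  | succ n ih => rw [pow_succ, Module.End.mul_apply, hx, ← Module.End.mul_apply,
      (hST.pow_left n).eq, Module.End.mul_apply, ih, ← Module.End.mul_apply, ← pow_succ']

section CentralDiff

variable (M : Type*) [AddCommGroup M]

def shiftBy (a : ℤ) : Module.End ℤ (ℤ → M) := LinearMap.funLeft ℤ M (· + a)

def centralDiff (a : ℤ) : Module.End ℤ (ℤ → M) := shiftBy M a - shiftBy M (-a)

variable {M}

@[simp]
lemma shiftBy_apply (a : ℤ) (f : ℤ → M) (m : ℤ) : shiftBy M a f m = f (m + a) := rfl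

lemma shiftBy_mul (a b : ℤ) : shiftBy M a * shiftBy M b = shiftBy M (a + b) := by
  ext f m
  simp [add_assoc]

lemma shiftBy_pow (a : ℤ) (n : ℕ) : shiftBy M a ^ n = shiftBy M (n * a) := by
  induction n with
  | zero => ext; simp
  | succ n ih => rw [pow_succ, ih, shiftBy_mul]; congr 1; push_cast; ring

lemma commute_shiftBy (a b : ℤ) : Commute (shiftBy M a) (shiftBy M b) := by
  rw [Commute, SemiconjBy, shiftBy_mul, shiftBy_mul, add_comm]

lemma centralDiff_apply (a : ℤ) (f : ℤ → M) (m : ℤ) :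
    centralDiff M a f m = f (m + a) - f (m - a) := by
  simp [centralDiff, sub_eq_add_neg]

lemma commute_centralDiff (a b : ℤ) : Commute (centralDiff M a) (centralDiff M b) := by
  unfold centralDiff
  apply Commute.sub_left <;> apply Commute.sub_right <;> apply commute_shiftBy

lemma centralDiff_pow_apply (a : ℤ) (n : ℕ) (f : ℤ → M) (m : ℤ) :
    (centralDiff M a ^ n) f m =
      ∑ i ∈ range (n + 1),
        ((-1 : ℤ) ^ i * n.choose i) • f (m + ((n : ℤ) - 2 * i) * a) := by
  rw [centralDiff, sub_eq_neg_add, ((commute_shiftBy (M := M) (-a) a).neg_left).add_pow]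
  simp only [LinearMap.sum_apply, Finset.sum_apply]
  refine sum_congr rfl fun i hi => ?_
  have hi : i ≤ n := Nat.lt_succ_iff.mp (mem_range.mp hi)
  have hsign :
      (-1 : Module.End ℤ (ℤ → M)) ^ i = (((-1 : ℤ) ^ i : ℤ) : Module.End ℤ (ℤ → M)) := by
    simp
  rw [neg_pow, hsign, shiftBy_pow, shiftBy_pow]
  simp only [Module.End.mul_apply, Module.End.intCast_apply, Module.End.natCast_apply,
    Pi.smul_apply, shiftBy_apply, mul_smul, smul_comm ((-1 : ℤ) ^ i), natCast_zsmul]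
  congr 3
  push_cast [hi]
  ring

variable {f : ℤ → M}

lemma centralDiff_apply_neg {ε : ℤ} (hf : ∀ m, f (-m) = ε • f m) (a m : ℤ) :
    centralDiff M a f (-m) = -ε • centralDiff M a f m := by
  rw [centralDiff_apply, centralDiff_apply, show -m + a = -(m - a) by ring,
    show -m - a = -(m + a) by ring, hf, hf, neg_smul, smul_sub]
  abel

lemma centralDiff_pow_apply_neg (hf : Function.Odd f) (a : ℤ) (n : ℕ) (m : ℤ) :
    (centralDiff M a ^ n) f (-m) = (-1 : ℤ) ^ (n + 1) • (centralDiff M a ^ n) f m := by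
  induction n generalizing m with
  | zero => simpa using hf m
  | succ n ih =>
    rw [pow_succ', Module.End.mul_apply, centralDiff_apply_neg ih,
      pow_succ (-1 : ℤ) (n + 1), mul_neg_one]

lemma centralDiff_pow_apply_add_add_neg_one_pow_smul (hf : Function.Odd f) (a : ℤ) (n : ℕ)
    (t : ℤ) :
    (centralDiff M a ^ n) f (a + t) + (-1 : ℤ) ^ n • (centralDiff M a ^ n) f (a - t) =
      (centralDiff M a ^ (n + 1)) f t := by
  rw [pow_succ', Module.End.mul_apply, centralDiff_apply, show a - t = -(t - a) by ring,
    centralDiff_pow_apply_neg hf, smul_smul, ← pow_add, Odd.neg_one_pow ⟨n, by ring⟩,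
    neg_one_smul, add_comm a t, ← sub_eq_add_neg]

lemma centralDiff_pow_apply_pair (hf : Function.Odd f) {n k : ℕ} (hk : k ≤ n) (a b : ℤ) :
    ((-1 : ℤ) ^ k * n.choose k) • (centralDiff M a ^ n) f (a + ((n : ℤ) - 2 * k) * b) +
      ((-1 : ℤ) ^ (n - k) * n.choose (n - k)) •
        (centralDiff M a ^ n) f (a + ((n : ℤ) - 2 * (n - k : ℕ)) * b) =
      ∑ i ∈ range (n + 2), ((-1 : ℤ) ^ (k + i) * n.choose k * (n + 1).choose i) •
        f (((n : ℤ) + 1 - 2 * i) * a + ((n : ℤ) - 2 * k) * b) := by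
  set t := ((n : ℤ) - 2 * k) * b
  have hreflect : a + ((n : ℤ) - 2 * (n - k : ℕ)) * b = a - t := by push_cast [hk]; ring
  rw [hreflect, neg_one_pow_mul_choose_sub hk, mul_comm ((-1 : ℤ) ^ n),
    mul_smul ((-1 : ℤ) ^ k * n.choose k), ← smul_add,
    centralDiff_pow_apply_add_add_neg_one_pow_smul hf, centralDiff_pow_apply, smul_sum]
  refine sum_congr rfl fun i _ => ?_
  rw [smul_smul, add_comm t]
  congr 1
  rw [pow_add]
  ring

lemma centralDiff_pow_apply_self [IsAddTorsionFree M] (hf : Function.Odd f) {n : ℕ}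
    (hn : Even n) (a : ℤ) :
    (centralDiff M a ^ n) f a =
      ∑ i ∈ range (n / 2 + 1),
        ((-1 : ℤ) ^ i * (n + 1).choose i) • f (((n : ℤ) + 1 - 2 * i) * a) := by
  refine IsAddTorsionFree.nsmul_right_injective two_ne_zero ?_
  dsimp only
  have hdouble : 2 • (centralDiff M a ^ n) f a = (centralDiff M a ^ (n + 1)) f 0 := by
    simpa [hn.neg_one_pow, two_nsmul] using centralDiff_pow_apply_add_add_neg_one_pow_smul hf a n 0
  rw [hdouble, centralDiff_pow_apply, sum_range_succ_eq_sum_pairs,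
    if_neg (by simpa [Nat.even_add_one] using hn), add_zero,
    show (n + 1 + 1) / 2 = n / 2 + 1 by omega, smul_sum]
  refine sum_congr rfl fun i hi => ?_
  have hi : i ≤ n + 1 := by rw [mem_range] at hi; omega
  have hreflect :
      (0 : ℤ) + ((n + 1 : ℕ) - 2 * (n + 1 - i : ℕ)) * a = -(((n : ℤ) + 1 - 2 * i) * a) := by
    push_cast [hi]; ring
  rw [hreflect, hf, neg_one_pow_mul_choose_sub hi, (hn.add_one).neg_one_pow, two_nsmul,
    neg_one_mul, neg_smul_neg, zero_add, Nat.cast_succ]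

lemma centralDiff_pow_apply_middle [IsAddTorsionFree M] (hf : Function.Odd f) {n : ℕ}
    (hn : Even n) (a b : ℤ) :
    ((-1 : ℤ) ^ (n / 2) * n.choose (n / 2)) •
        (centralDiff M a ^ n) f (a + ((n : ℤ) - 2 * (n / 2 : ℕ)) * b) =
      ∑ i ∈ range (n / 2 + 1),
        ((-1 : ℤ) ^ (n / 2 + i) * n.choose (n / 2) * (n + 1).choose i) •
          f (((n : ℤ) + 1 - 2 * i) * a) := by
  have hmid : (n : ℤ) - 2 * (n / 2 : ℕ) = 0 := by have := Nat.even_iff.mp hn; omega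
  rw [hmid, zero_mul, add_zero, centralDiff_pow_apply_self hf hn, smul_sum]
  refine sum_congr rfl fun i _ => ?_
  rw [smul_smul, pow_add]
  ring_nf

lemma commute_compLeft_centralDiff (φ : M →ₗ[ℤ] M) (a : ℤ) :
    Commute (LinearMap.compLeft φ ℤ) (centralDiff M a) := by
  ext f m
  simp [centralDiff_apply]

end CentralDiff

def halfLieRight (y : A) : A →ₗ[ℤ] A :=
  (AddMonoidHom.mk' (fun x => ((1 : ℂ) / 2) • ⁅x, y⁆) fun x x' => by
    rw [← smul_add, Ring.lie_def, Ring.lie_def, Ring.lie_def, add_mul, mul_add,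
      add_sub_add_comm]).toIntLinearMap

lemma Dp_eq_pow_apply (X H : ℤ → A) (j l : ℤ) (u : ℕ) :
    Dp X H j l u = (LinearMap.compLeft (halfLieRight (Lam1 H j l)) ℤ ^ u) X j := by
  induction u with
  | zero => rfl
  | succ u ih => rw [Dp, ih, pow_succ', Module.End.mul_apply]; rfl

lemma compLeft_halfLieRight_Lam1 (X H : ℤ → A) (hXneg : Function.Odd X)
    (hHX : ∀ k j : ℤ, ⁅H k, X j⁆ = 2 • (X (j + k) - X (k - j))) (j l : ℤ) :
    LinearMap.compLeft (halfLieRight (Lam1 H j l)) ℤ X =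
      (centralDiff A l * centralDiff A j) X := by
  funext m
  have hbracket : ∀ k, ⁅X m, H k⁆ = -(2 • (X (m + k) - X (k - m))) := fun k => by
    rw [← hHX, Ring.lie_def, Ring.lie_def, neg_sub]
  have hLam1 : ⁅X m, Lam1 H j l⁆ = ⁅X m, H (j - l)⁆ - ⁅X m, H (j + l)⁆ := by
    simp only [Lam1, Ring.lie_def, mul_neg, neg_mul, mul_sub, sub_mul]
    abel
  have hhalf : ∀ z : A, ((1 : ℂ) / 2) • (2 • z) = z := fun z => by
    rw [← ofNat_smul_eq_nsmul ℂ 2, smul_smul]; norm_num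
  show ((1 : ℂ) / 2) • ⁅X m, Lam1 H j l⁆ = _
  rw [hLam1, hbracket, hbracket, neg_sub_neg, ← smul_sub, hhalf]
  simp only [Module.End.mul_apply, centralDiff_apply]
  rw [show j + l - m = -(m - l - j) by ring, show j - l - m = -(m + l - j) by ring, hXneg, hXneg,
    show m + (j + l) = m + l + j by ring, show m + (j - l) = m - l + j by ring]
  abel

theorem Dp_u1_formula_general (X H : ℤ → A)
    (hXneg : ∀ m : ℤ, X (-m) = -X m)
    (hHX : ∀ k j : ℤ, ⁅H k, X j⁆ = 2 • (X (j + k) - X (k - j)))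
    (u : ℕ) (j l : ℕ+) :
    Dp X H ((j : ℕ) : ℤ) ((l : ℕ) : ℤ) u =
      (∑ k ∈ Finset.range ((u + 1) / 2), ∑ i ∈ Finset.range (u + 2),
        ((-1 : ℤ) ^ (k + i) * (u.choose k : ℤ) * ((u + 1).choose i : ℤ)) •
          X (((u : ℤ) + 1 - 2 * i) * ((j : ℕ) : ℤ) + ((u : ℤ) - 2 * k) * ((l : ℕ) : ℤ)))
      + (if Even u then
          ∑ i ∈ Finset.range (u / 2 + 1),
            ((-1 : ℤ) ^ (u / 2 + i) * (u.choose (u / 2) : ℤ) * ((u + 1).choose i : ℤ)) •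
              X (((u : ℤ) + 1 - 2 * i) * ((j : ℕ) : ℤ))
        else 0) := by
  have : IsAddTorsionFree A := .of_isTorsionFree ℂ A
  have hcommute := (commute_compLeft_centralDiff (halfLieRight (Lam1 H j l)) l).mul_right
    (commute_compLeft_centralDiff _ j)
  rw [Dp_eq_pow_apply, Module.End.pow_apply_eq_pow_apply_of_commute hcommute
      (compLeft_halfLieRight_Lam1 X H hXneg hHX j l),
    (commute_centralDiff _ _).mul_pow, Module.End.mul_apply, centralDiff_pow_apply,
    sum_range_succ_eq_sum_pairs]
  congr 1
  · refine sum_congr rfl fun k hk => centralDiff_pow_apply_pair hXneg ?_ _ _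
    rw [mem_range] at hk
    omega
  · split_ifs with hu
    · exact centralDiff_pow_apply_middle hXneg hu _ _
    · rfl

/-- Explicit formula for `D^{Γ,+}_{u,1}(j,l)` as a `ℤ`-linear combination of the
`x_n^{Γ,+}` (Proposition 2.3, eq. (3) of the paper). -/
theorem Dp_u1_formula (X Y H : ℤ → A)
    (hXneg : ∀ m : ℤ, X (-m) = -X m) (hX0 : X 0 = 0)
    (hYneg : ∀ m : ℤ, Y (-m) = -Y m) (hY0 : Y 0 = 0)
    (hHneg : ∀ m : ℤ, H (-m) = H m)
    (hXY : ∀ j l : ℤ, ⁅X j, Y l⁆ = H (j + l) - H (j - l))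
    (hHX : ∀ k j : ℤ, ⁅H k, X j⁆ = 2 • (X (j + k) - X (k - j)))
    (hHY : ∀ k l : ℤ, ⁅H k, Y l⁆ = -(2 • (Y (l + k) + Y (l - k))))
    (hHH : ∀ k m : ℤ, ⁅H k, H m⁆ = 0)
    (u : ℕ) (j l : ℕ+) :
    Dp X H ((j : ℕ) : ℤ) ((l : ℕ) : ℤ) u =
      (∑ k ∈ Finset.range ((u + 1) / 2), ∑ i ∈ Finset.range (u + 2),
        ((-1 : ℤ) ^ (k + i) * (u.choose k : ℤ) * ((u + 1).choose i : ℤ)) •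
          X (((u : ℤ) + 1 - 2 * i) * ((j : ℕ) : ℤ) + ((u : ℤ) - 2 * k) * ((l : ℕ) : ℤ)))
      + (if Even u then
          ∑ i ∈ Finset.range (u / 2 + 1),
            ((-1 : ℤ) ^ (u / 2 + i) * (u.choose (u / 2) : ℤ) * ((u + 1).choose i : ℤ)) •
              X (((u : ℤ) + 1 - 2 * i) * ((j : ℕ) : ℤ))
        else 0) :=
  Dp_u1_formula_general X H hXneg hHX u j l
end
end

section
/- For all n ∈ ℤ≥0 and j,l ∈ ℕ+, p^Γ_{2n+1}(j,l) = Σ_{i=0}^{n} Σ_{k=0}^{n} (−1)^{k+i+1} C(2n+1,i) C(2n+1,k) Λ^Γ_{(2n+1−2i)j,(2n+1−2k)l,1}, where Λ^Γ_{a,b,1} = −(h^Γ_{a+b} − h^Γ_{a−b}). -/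
open Finset

noncomputable section

/- `V` plays the role of the free `ℂ`-vector space with basis `{h^Γ_m : m ∈ ℤ≥0}`,
with the convention `h^Γ_{-m} = h^Γ_m` built into the indexing function `H : ℤ → V`. -/
variable {V : Type*} [AddCommGroup V] [Module ℂ V]

/-- The explicit formula for `p^Γ_u(j,l)` in terms of the `h^Γ_m`. -/
def pF (H : ℤ → V) (u : ℕ) (j l : ℤ) : V :=
  (∑ k ∈ Finset.range ((u + 1) / 2), ∑ i ∈ Finset.range (u + 1),
    ((-1 : ℤ) ^ (k + i) * (u.choose k : ℤ) * (u.choose i : ℤ)) •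
      H (((u : ℤ) - 2 * i) * j + ((u : ℤ) - 2 * k) * l))
  + (if Even u then
      ∑ i ∈ Finset.range (u + 1),
        ((-1 : ℤ) ^ (u / 2 + i) * ((u - 1).choose ((u - 2) / 2) : ℤ) * (u.choose i : ℤ)) •
          H (((u : ℤ) - 2 * i) * j)
    else 0)

/-- `Λ^Γ_{a,b,1} = -(h^Γ_{a+b} - h^Γ_{a-b})`. -/
def Lam1V (H : ℤ → V) (a b : ℤ) : V := -(H (a + b) - H (a - b))

omit [Module ℂ V] in
private lemma sum_range_fold (n : ℕ) (g : ℕ → V) :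
    ∑ i ∈ Finset.range (2 * n + 1 + 1), g i
      = ∑ i ∈ Finset.range (n + 1), (g i + g (2 * n + 1 - i)) := by
  rw [show 2 * n + 1 + 1 = (n + 1) + (n + 1) from by ring, Finset.sum_range_add,
    ← Finset.sum_range_reflect (fun i => g ((n + 1) + i)) (n + 1),
    ← Finset.sum_add_distrib]
  refine Finset.sum_congr rfl fun i hi => ?_
  rw [Finset.mem_range] at hi
  congr 2
  omega

/-- `p^Γ_{2n+1}(j,l) = ∑_{i,k=0}^n (-1)^{k+i+1} C(2n+1,i) C(2n+1,k)`
`Λ^Γ_{(2n+1-2i)j,(2n+1-2k)l,1}`. -/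
theorem p_odd_formula (H : ℤ → V) (hHneg : ∀ m : ℤ, H (-m) = H m)
    (n : ℕ) (j l : ℕ+) :
    pF H (2 * n + 1) ((j : ℕ) : ℤ) ((l : ℕ) : ℤ) =
      ∑ i ∈ Finset.range (n + 1), ∑ k ∈ Finset.range (n + 1),
        ((-1 : ℤ) ^ (k + i + 1) * ((2 * n + 1).choose i : ℤ) * ((2 * n + 1).choose k : ℤ)) •
          Lam1V H ((2 * (n : ℤ) + 1 - 2 * i) * ((j : ℕ) : ℤ))
            ((2 * (n : ℤ) + 1 - 2 * k) * ((l : ℕ) : ℤ)) := by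
  have hodd : ¬ Even (2 * n + 1) := by simp [Nat.even_add_one, Nat.even_mul]
  have hhalf : (2 * n + 1 + 1) / 2 = n + 1 := by omega
  rw [pF, if_neg hodd, add_zero, hhalf]
  rw [Finset.sum_congr rfl fun k (_ : k ∈ Finset.range (n + 1)) => sum_range_fold n _,
    Finset.sum_comm]
  refine Finset.sum_congr rfl fun i hi => Finset.sum_congr rfl fun k hk => ?_
  rw [Finset.mem_range] at hi hk
  have hi' : i ≤ n := by omega
  have hk' : k ≤ n := by omega
  set u := 2 * n + 1 with hu
  set a : ℤ := (2 * (n : ℤ) + 1 - 2 * i) * ((j : ℕ) : ℤ) with ha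
  set b : ℤ := (2 * (n : ℤ) + 1 - 2 * k) * ((l : ℕ) : ℤ) with hb
  have hcast : ((u - i : ℕ) : ℤ) = (u : ℤ) - i := by
    push_cast [Nat.cast_sub (by omega : i ≤ u)]; ring
  have harg1 : ((u : ℤ) - 2 * i) * ((j : ℕ) : ℤ) + ((u : ℤ) - 2 * k) * ((l : ℕ) : ℤ)
      = a + b := by push_cast [ha, hb, hu]; ring
  have harg2 : ((u : ℤ) - 2 * ((u - i : ℕ) : ℤ)) * ((j : ℕ) : ℤ)
      + ((u : ℤ) - 2 * k) * ((l : ℕ) : ℤ) = -(a - b) := by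
    rw [hcast]; push_cast [ha, hb, hu]; ring
  have hchoose : u.choose (u - i) = u.choose i := Nat.choose_symm (by omega)
  have hsign : ((-1 : ℤ)) ^ (k + (u - i)) = -(-1 : ℤ) ^ (k + i) := by
    rw [show k + (u - i) = (k + i) + (2 * (n - i) + 1) from by omega, pow_add,
      pow_succ, pow_mul, neg_one_sq, one_pow]
    ring
  rw [show 2 * n + 1 - i = u - i from rfl, harg1, harg2, hHneg, hchoose, hsign, Lam1V]

  module
end
end

section
/- For all n ∈ ℕ+ and j,l ∈ ℕ+, p^Γ_{2n}(j,l) = Σ_{i=0}^{n−1} Σ_{k=0}^{2n} (−1)^{k+i+1} C(2n−1,i) C(2n,k) Λ^Γ_{(2n−1−2i)j+(2n−2k)l, j, 1}, where Λ^Γ_{a,b,1} = −(h^Γ_{a+b} − h^Γ_{a−b}). -/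
open Finset

noncomputable section

/- `V` plays the role of the free `ℂ`-vector space with basis `{h^Γ_m : m ∈ ℤ≥0}`,
with the convention `h^Γ_{-m} = h^Γ_m` built into the indexing function `H : ℤ → V`. -/
variable {V : Type*} [AddCommGroup V] [Module ℂ V]

/-! ### Auxiliary definitions and lemmas -/

/-- The basic summand `(-1)^(i+k) C(2N,i) C(2N,k) • H((2N-2i)J + (2N-2k)L)`. -/
def fA (H : ℤ → V) (N : ℕ) (J L : ℤ) (i k : ℕ) : V :=
  ((-1 : ℤ) ^ (i + k) * ((2 * N).choose i : ℤ) * ((2 * N).choose k : ℤ)) •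
    H ((2 * (N : ℤ) - 2 * i) * J + (2 * (N : ℤ) - 2 * k) * L)

lemma fA_sym (H : ℤ → V) (hH : ∀ m : ℤ, H (-m) = H m) (N : ℕ) (J L : ℤ)
    {i k : ℕ} (hi : i ≤ 2 * N) (hk : k ≤ 2 * N) :
    fA H N J L (2 * N - i) (2 * N - k) = fA H N J L i k := by
  unfold fA
  have h1 : (-1 : ℤ) ^ ((2 * N - i) + (2 * N - k)) = (-1) ^ (i + k) := by
    rcases Nat.even_or_odd (i + k) with h | h
    · obtain ⟨r, hr⟩ := h
      rw [Even.neg_one_pow ⟨r, hr⟩, Even.neg_one_pow ⟨2 * N - r, by omega⟩]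
    · obtain ⟨r, hr⟩ := h
      rw [Odd.neg_one_pow ⟨r, hr⟩, Odd.neg_one_pow ⟨2 * N - 1 - r, by omega⟩]
  have hci : ((2 * N - i : ℕ) : ℤ) = 2 * (N : ℤ) - (i : ℤ) := by omega
  have hck : ((2 * N - k : ℕ) : ℤ) = 2 * (N : ℤ) - (k : ℤ) := by omega
  have harg : (2 * (N : ℤ) - 2 * ((2 * N - i : ℕ) : ℤ)) * J +
      (2 * (N : ℤ) - 2 * ((2 * N - k : ℕ) : ℤ)) * L =
      -((2 * (N : ℤ) - 2 * i) * J + (2 * (N : ℤ) - 2 * k) * L) := by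
    rw [hci, hck]; ring
  rw [h1, Nat.choose_symm hi, Nat.choose_symm hk, harg, hH]

lemma sum_fA_col_sym (H : ℤ → V) (hH : ∀ m : ℤ, H (-m) = H m) (N : ℕ) (J L : ℤ)
    {i : ℕ} (hi : i ≤ 2 * N) :
    ∑ k ∈ range (2 * N + 1), fA H N J L (2 * N - i) k =
      ∑ k ∈ range (2 * N + 1), fA H N J L i k := by
  rw [← Finset.sum_range_reflect (fun k => fA H N J L (2 * N - i) k) (2 * N + 1)]
  refine Finset.sum_congr rfl fun k hk => ?_
  have hk' : k ≤ 2 * N := by have := mem_range.mp hk; omega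
  have h : 2 * N + 1 - 1 - k = 2 * N - k := by omega
  rw [h, fA_sym H hH N J L hi hk']

lemma sum_fA_row_sym (H : ℤ → V) (hH : ∀ m : ℤ, H (-m) = H m) (N : ℕ) (J L : ℤ)
    {k : ℕ} (hk : k ≤ 2 * N) :
    ∑ i ∈ range (2 * N + 1), fA H N J L i (2 * N - k) =
      ∑ i ∈ range (2 * N + 1), fA H N J L i k := by
  rw [← Finset.sum_range_reflect (fun i => fA H N J L i (2 * N - k)) (2 * N + 1)]
  refine Finset.sum_congr rfl fun i hi => ?_
  have hi' : i ≤ 2 * N := by have := mem_range.mp hi; omega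
  have h : 2 * N + 1 - 1 - i = 2 * N - i := by omega
  rw [h, fA_sym H hH N J L hi' hk]

/-- Folding a symmetric sum over `range (2N+1)`. -/
lemma sum_range_symm_fold {M : Type*} [AddCommMonoid M] (g : ℕ → M) (N : ℕ)
    (hsym : ∀ i ≤ 2 * N, g (2 * N - i) = g i) :
    ∑ i ∈ range (2 * N + 1), g i =
      ((∑ i ∈ range N, g i) + ∑ i ∈ range N, g i) + g N := by
  have hsplit : (∑ i ∈ Ico 0 (N + 1), g i) + ∑ i ∈ Ico (N + 1) (2 * N + 1), g i =
      ∑ i ∈ Ico 0 (2 * N + 1), g i :=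
    Finset.sum_Ico_consecutive g (Nat.zero_le _) (by omega)
  have hrefl : (∑ j ∈ Ico 0 N, g (2 * N - j)) =
      ∑ j ∈ Ico (2 * N + 1 - N) (2 * N + 1 - 0), g j :=
    Finset.sum_Ico_reflect g 0 (by omega)
  rw [show 2 * N + 1 - N = N + 1 by omega, Nat.sub_zero] at hrefl
  have h2 : ∑ j ∈ Ico (N + 1) (2 * N + 1), g j = ∑ j ∈ range N, g j := by
    rw [← hrefl, ← Nat.Ico_zero_eq_range]
    refine Finset.sum_congr rfl fun x hx => ?_
    have := mem_Ico.mp hx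
    exact hsym x (by omega)
  calc ∑ i ∈ range (2 * N + 1), g i
      = (∑ i ∈ Ico 0 (N + 1), g i) + ∑ i ∈ Ico (N + 1) (2 * N + 1), g i := by
        rw [hsplit, Nat.Ico_zero_eq_range]
    _ = (∑ i ∈ range (N + 1), g i) + ∑ i ∈ range N, g i := by
        rw [h2, Nat.Ico_zero_eq_range]
    _ = ((∑ i ∈ range N, g i) + g N) + ∑ i ∈ range N, g i := by
        rw [Finset.sum_range_succ]
    _ = ((∑ i ∈ range N, g i) + ∑ i ∈ range N, g i) + g N := by abel

lemma choose_central (N : ℕ) (hN : 1 ≤ N) :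
    (2 * N).choose N = 2 * ((2 * N - 1).choose (N - 1)) := by
  obtain ⟨m, rfl⟩ : ∃ m, N = m + 1 := ⟨N - 1, by omega⟩
  have h1 : 2 * (m + 1) = (2 * m + 1) + 1 := by ring
  rw [h1, Nat.choose_succ_succ]
  simp only [Nat.add_sub_cancel]
  have hs := Nat.choose_symm (show m ≤ 2 * m + 1 by omega)
  rw [show 2 * m + 1 - m = m + 1 by omega] at hs
  simp only [Nat.succ_eq_add_one]
  omega

lemma choose_pascal (N i : ℕ) (hN : 1 ≤ N) :
    (2 * N - 1).choose i + (2 * N - 1).choose (i + 1) = (2 * N).choose (i + 1) := by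
  have h : 2 * N = (2 * N - 1) + 1 := by omega
  conv_rhs => rw [h]
  rw [Nat.choose_succ_succ]

/-- `p^Γ_{2n}(j,l) = ∑_{i=0}^{n-1} ∑_{k=0}^{2n} (-1)^{k+i+1} C(2n-1,i) C(2n,k)`
`Λ^Γ_{(2n-1-2i)j+(2n-2k)l, j, 1}`. -/
theorem p_even_formula (H : ℤ → V) (hHneg : ∀ m : ℤ, H (-m) = H m)
    (n : ℕ+) (j l : ℕ+) :
    pF H (2 * (n : ℕ)) ((j : ℕ) : ℤ) ((l : ℕ) : ℤ) =
      ∑ i ∈ Finset.range (n : ℕ), ∑ k ∈ Finset.range (2 * (n : ℕ) + 1),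
        ((-1 : ℤ) ^ (k + i + 1) * ((2 * (n : ℕ) - 1).choose i : ℤ) *
            ((2 * (n : ℕ)).choose k : ℤ)) •
          Lam1V H ((2 * ((n : ℕ) : ℤ) - 1 - 2 * i) * ((j : ℕ) : ℤ)
              + (2 * ((n : ℕ) : ℤ) - 2 * k) * ((l : ℕ) : ℤ))
            ((j : ℕ) : ℤ) := by
  set N : ℕ := (n : ℕ) with hNdef
  have hN1 : 1 ≤ N := n.one_le
  set J : ℤ := ((j : ℕ) : ℤ) with hJdef
  set L : ℤ := ((l : ℕ) : ℤ) with hLdef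
  -- the central binomial identity, in ℤ
  have hch : ((2 * N).choose N : ℤ) = 2 * ((2 * N - 1).choose (N - 1) : ℤ) := by
    exact_mod_cast congrArg (fun t : ℕ => (t : ℤ)) (choose_central N hN1)
  -- shorthand for columns, rows and the two auxiliary sums
  set Fc : ℕ → V := fun i => ∑ k ∈ range (2 * N + 1), fA H N J L i k with hFc
  set Rw : ℕ → V := fun k => ∑ i ∈ range (2 * N + 1), fA H N J L i k with hRw
  set G : ℕ → V := fun i => ∑ k ∈ range (2 * N + 1),
      ((-1 : ℤ) ^ (i + k) * ((2 * N - 1).choose i : ℤ) * ((2 * N).choose k : ℤ)) •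
        H ((2 * (N : ℤ) - 2 * i) * J + (2 * (N : ℤ) - 2 * k) * L) with hG
  set G2 : ℕ → V := fun i => ∑ k ∈ range (2 * N + 1),
      ((-1 : ℤ) ^ (i + k) * ((2 * N - 1).choose (i - 1) : ℤ) * ((2 * N).choose k : ℤ)) •
        H ((2 * (N : ℤ) - 2 * i) * J + (2 * (N : ℤ) - 2 * k) * L) with hG2
  -- Step 1: the left-hand side
  have hL : pF H (2 * N) J L = (∑ k ∈ range N, Rw k) +
      ∑ i ∈ range (2 * N + 1),
        ((-1 : ℤ) ^ (N + i) * ((2 * N - 1).choose (N - 1) : ℤ) * ((2 * N).choose i : ℤ)) •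
          H ((2 * (N : ℤ) - 2 * i) * J) := by
    unfold pF
    rw [if_pos (even_two_mul N)]
    congr 1
    · rw [show (2 * N + 1) / 2 = N by omega]
      refine Finset.sum_congr rfl fun k _ => ?_
      rw [hRw]
      refine Finset.sum_congr rfl fun i _ => ?_
      unfold fA
      rw [show ((-1 : ℤ) ^ (k + i) * ((2 * N).choose k : ℤ) * ((2 * N).choose i : ℤ)) =
          ((-1 : ℤ) ^ (i + k) * ((2 * N).choose i : ℤ) * ((2 * N).choose k : ℤ)) by ring]
      congr 2 <;> (push_cast; ring)
    · rw [show (2 * N) / 2 = N by omega, show (2 * N - 2) / 2 = N - 1 by omega]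
      refine Finset.sum_congr rfl fun i _ => ?_
      congr 2 <;> (push_cast; ring)
  -- Step 2: doubling the boundary term of the LHS gives the row `Rw N`
  have hB2 : (2 : ℤ) • (∑ i ∈ range (2 * N + 1),
      ((-1 : ℤ) ^ (N + i) * ((2 * N - 1).choose (N - 1) : ℤ) * ((2 * N).choose i : ℤ)) •
        H ((2 * (N : ℤ) - 2 * i) * J)) = Rw N := by
    rw [Finset.smul_sum, hRw]
    refine Finset.sum_congr rfl fun i _ => ?_
    unfold fA
    rw [smul_smul]
    rw [show (2 * (N : ℤ) - 2 * (N : ℕ)) * L = 0 by push_cast; ring, add_zero]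
    congr 1
    rw [hch]
    ring
  -- Step 3: the right-hand side as a sum of `G2 (i+1) + G i`
  have hR : (∑ i ∈ Finset.range N, ∑ k ∈ Finset.range (2 * N + 1),
      ((-1 : ℤ) ^ (k + i + 1) * ((2 * N - 1).choose i : ℤ) * ((2 * N).choose k : ℤ)) •
        Lam1V H ((2 * (N : ℤ) - 1 - 2 * i) * J + (2 * (N : ℤ) - 2 * k) * L) J) =
      ∑ i ∈ range N, (G2 (i + 1) + G i) := by
    refine Finset.sum_congr rfl fun i _ => ?_
    rw [hG2, hG, ← Finset.sum_add_distrib]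
    refine Finset.sum_congr rfl fun k _ => ?_
    rw [Lam1V]
    have ha1 : (2 * (N : ℤ) - 1 - 2 * i) * J + (2 * (N : ℤ) - 2 * k) * L - J =
        (2 * (N : ℤ) - 2 * ((i : ℕ) + 1 : ℕ)) * J + (2 * (N : ℤ) - 2 * k) * L := by
      push_cast; ring
    have ha2 : (2 * (N : ℤ) - 1 - 2 * i) * J + (2 * (N : ℤ) - 2 * k) * L + J =
        (2 * (N : ℤ) - 2 * i) * J + (2 * (N : ℤ) - 2 * k) * L := by
      push_cast; ring
    rw [smul_neg, smul_sub, neg_sub, ha1, ha2]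
    rw [sub_eq_add_neg, ← neg_smul]
    congr 2
    · rw [show (i + 1 : ℕ) - 1 = i from rfl]
      ring
    · ring
  -- Step 4: Pascal identity at the level of the sums: `G2 (i+1) + G (i+1) = Fc (i+1)`
  have hPas : ∀ i : ℕ, G2 (i + 1) + G (i + 1) = Fc (i + 1) := by
    intro i
    rw [hG2, hG, hFc, ← Finset.sum_add_distrib]
    refine Finset.sum_congr rfl fun k _ => ?_
    unfold fA
    rw [← add_smul]
    congr 1
    have hp : (((2 * N - 1).choose i : ℤ) + ((2 * N - 1).choose (i + 1) : ℤ)) =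
        ((2 * N).choose (i + 1) : ℤ) := by
      exact_mod_cast congrArg (fun t : ℕ => (t : ℤ)) (choose_pascal N i hN1)
    rw [show (i + 1 : ℕ) - 1 = i from rfl]
    calc (-1 : ℤ) ^ (i + 1 + k) * ((2 * N - 1).choose i : ℤ) * ((2 * N).choose k : ℤ) +
          (-1 : ℤ) ^ (i + 1 + k) * ((2 * N - 1).choose (i + 1) : ℤ) * ((2 * N).choose k : ℤ)
        = (-1 : ℤ) ^ (i + 1 + k) *
            (((2 * N - 1).choose i : ℤ) + ((2 * N - 1).choose (i + 1) : ℤ)) *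
            ((2 * N).choose k : ℤ) := by ring
      _ = _ := by rw [hp]
  -- Step 5: `G 0 = Fc 0`
  have hG0 : G 0 = Fc 0 := by
    rw [hG, hFc]
    refine Finset.sum_congr rfl fun k _ => ?_
    unfold fA
    simp [Nat.choose_zero_right]
  -- Step 6: the RHS equals `∑_{i<N} Fc i + (Fc N - G N)`
  have hR2 : (∑ i ∈ range N, (G2 (i + 1) + G i)) =
      (∑ i ∈ range N, Fc i) + (Fc N - G N) := by
    have h1 : ∀ i : ℕ, G2 (i + 1) + G i = (Fc (i + 1) - G (i + 1)) + G i := by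
      intro i
      rw [eq_sub_iff_add_eq.mpr (hPas i)]
    calc ∑ i ∈ range N, (G2 (i + 1) + G i)
        = ∑ i ∈ range N, ((Fc (i + 1) - G (i + 1)) + G i) :=
          Finset.sum_congr rfl fun i _ => h1 i
      _ = (∑ i ∈ range N, Fc (i + 1)) + ∑ i ∈ range N, (G i - G (i + 1)) := by
          rw [← Finset.sum_add_distrib]
          exact Finset.sum_congr rfl fun i _ => by abel
      _ = (∑ i ∈ range N, Fc (i + 1)) + (G 0 - G N) := by
          rw [Finset.sum_range_sub' G N]
      _ = ((∑ i ∈ range N, Fc (i + 1)) + Fc 0) + (G 0 - G N) - Fc 0 := by abel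
      _ = (∑ i ∈ range (N + 1), Fc i) + (G 0 - G N) - Fc 0 := by
          rw [Finset.sum_range_succ' Fc N]
      _ = ((∑ i ∈ range N, Fc i) + Fc N) + (G 0 - G N) - Fc 0 := by
          rw [Finset.sum_range_succ Fc N]
      _ = (∑ i ∈ range N, Fc i) + (Fc N - G N) := by rw [hG0]; abel
  -- Step 7: doubling the boundary term of the RHS gives the column `Fc N`
  have hB2' : (2 : ℤ) • (Fc N - G N) = Fc N := by
    have hFN : Fc N = G2 N + G N := by
      obtain ⟨m, hm⟩ : ∃ m, N = m + 1 := ⟨N - 1, by omega⟩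
      rw [hm, ← hPas m]
    have h2G2 : (2 : ℤ) • G2 N = Fc N := by
      rw [hG2, hFc, Finset.smul_sum]
      refine Finset.sum_congr rfl fun k _ => ?_
      unfold fA
      rw [smul_smul]
      congr 1
      have h' : ((2 * N - 1).choose (N - 1) : ℤ) * 2 = ((2 * N).choose N : ℤ) := by
        rw [hch]; ring
      calc (2 : ℤ) * ((-1) ^ (N + k) * ((2 * N - 1).choose (N - 1) : ℤ) *
            ((2 * N).choose k : ℤ))
          = (-1 : ℤ) ^ (N + k) * (((2 * N - 1).choose (N - 1) : ℤ) * 2) *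
            ((2 * N).choose k : ℤ) := by ring
        _ = _ := by rw [h']
    calc (2 : ℤ) • (Fc N - G N) = (2 : ℤ) • G2 N := by rw [hFN]; abel
      _ = Fc N := h2G2
  -- Step 8: the grand total, two ways
  have hcolsym : ∀ i ≤ 2 * N, Fc (2 * N - i) = Fc i := fun i hi =>
    sum_fA_col_sym H hHneg N J L hi
  have hrowsym : ∀ k ≤ 2 * N, Rw (2 * N - k) = Rw k := fun k hk =>
    sum_fA_row_sym H hHneg N J L hk
  have hScol : ∑ i ∈ range (2 * N + 1), Fc i =
      ((∑ i ∈ range N, Fc i) + ∑ i ∈ range N, Fc i) + Fc N :=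
    sum_range_symm_fold Fc N hcolsym
  have hSrow : ∑ k ∈ range (2 * N + 1), Rw k =
      ((∑ k ∈ range N, Rw k) + ∑ k ∈ range N, Rw k) + Rw N :=
    sum_range_symm_fold Rw N hrowsym
  have hcomm : ∑ i ∈ range (2 * N + 1), Fc i = ∑ k ∈ range (2 * N + 1), Rw k := by
    rw [hFc, hRw]
    exact Finset.sum_comm
  -- Step 9: conclude `2 • LHS = 2 • RHS`
  have hmain : (2 : ℤ) • pF H (2 * N) J L =
      (2 : ℤ) • ∑ i ∈ Finset.range N, ∑ k ∈ Finset.range (2 * N + 1),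
        ((-1 : ℤ) ^ (k + i + 1) * ((2 * N - 1).choose i : ℤ) * ((2 * N).choose k : ℤ)) •
          Lam1V H ((2 * (N : ℤ) - 1 - 2 * i) * J + (2 * (N : ℤ) - 2 * k) * L) J := by
    rw [hL, hR, hR2, smul_add, smul_add, hB2, hB2']
    rw [two_smul, two_smul]
    have := hScol.symm.trans (hcomm.trans hSrow)
    -- this : (∑ Fc + ∑ Fc) + Fc N = (∑ Rw + ∑ Rw) + Rw N
    abel_nf
    abel_nf at this
    linear_combination (norm := abel) - this
  -- Step 10: cancel the factor 2
  have h2 : ((2 : ℂ)) • pF H (2 * N) J L = (2 : ℂ) •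
      ∑ i ∈ Finset.range N, ∑ k ∈ Finset.range (2 * N + 1),
        ((-1 : ℤ) ^ (k + i + 1) * ((2 * N - 1).choose i : ℤ) * ((2 * N).choose k : ℤ)) •
          Lam1V H ((2 * (N : ℤ) - 1 - 2 * i) * J + (2 * (N : ℤ) - 2 * k) * L) J := by
    rw [show ((2 : ℂ)) = ((2 : ℤ) : ℂ) by norm_num, Int.cast_smul_eq_zsmul,
      Int.cast_smul_eq_zsmul]
    exact hmain
  have := congrArg (fun v => ((2 : ℂ)⁻¹) • v) h2
  simpa [smul_smul] using this
end
end

section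
/- In U(O), for all k,u ∈ ℤ≥0 and j,l ∈ ℕ+: [D^{Γ,+}_{u,1}(j,l), D^{Γ,-}_{k,1}(j,l)] = p^Γ_{k+u+1}(j,l), where p^Γ_s(j,l) := [x_j^{Γ,+}, D^{Γ,-}_{s−1,1}(j,l)]. -/
open Finset

noncomputable section

/- Setting: `A` plays the role of the universal enveloping algebra `U(O)` of the
Onsager algebra.  `X m = x_m^{Γ,+}`, `Y m = x_m^{Γ,-}`, `H m = h_m^Γ` (indexed by `ℤ`
via the conventions `x_{-m}^{Γ,±} = -x_m^{Γ,±}`, `x_0^{Γ,±} = 0`, `h_{-m}^Γ = h_m^Γ`),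
and the Lie brackets of `O` are imposed as commutator relations. -/
variable {A : Type*} [Ring A] [Algebra ℂ A]

section LieAlgebra

open Submodule

variable {R L : Type*} [CommRing R] [LieRing L] [LieAlgebra R L]

theorem lie_mem_span_of_forall_lie_mem_span {s t u : Set L}
    (h : ∀ x ∈ s, ∀ y ∈ t, ⁅x, y⁆ ∈ span R u) {x y : L}
    (hx : x ∈ span R s) (hy : y ∈ span R t) : ⁅x, y⁆ ∈ span R u := by
  refine span_le.2 ?_
    (map₂_span_span R (LieModule.toEnd R L L : L →ₗ[R] Module.End R L) s t ▸
      apply_mem_map₂ _ hx hy)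
  rintro _ ⟨a, ha, b, hb, rfl⟩
  exact h a ha b hb

theorem lie_eq_zero_of_forall_lie_eq_zero {s t : Set L}
    (h : ∀ x ∈ s, ∀ y ∈ t, ⁅x, y⁆ = 0) {x y : L}
    (hx : x ∈ span R s) (hy : y ∈ span R t) : ⁅x, y⁆ = 0 := by
  simpa using lie_mem_span_of_forall_lie_mem_span (u := ∅)
    (by simpa using h) hx hy

/-- `ad Λ` is a derivation, so one step of `a` turns into one step of `b` plus
`⁅Λ, ⁅a u, b k⁆⁆`, which vanishes by induction. -/
theorem lie_eq_lie_zero_of_recursions (a b : ℕ → L) (Λ : L) (c : R)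
    (ha : ∀ u, a (u + 1) = c • ⁅a u, Λ⁆) (hb : ∀ k, b (k + 1) = c • ⁅Λ, b k⁆)
    (hΛ : ∀ k, ⁅Λ, ⁅a 0, b k⁆⁆ = 0) (u k : ℕ) :
    ⁅a u, b k⁆ = ⁅a 0, b (k + u)⁆ := by
  induction u generalizing k with
  | zero => rfl
  | succ u ih =>
    calc ⁅a (u + 1), b k⁆
        = ⁅a u, c • ⁅Λ, b k⁆⁆ - c • ⁅Λ, ⁅a u, b k⁆⁆ := by
          rw [ha, smul_lie, lie_lie, smul_sub, lie_smul]
      _ = ⁅a 0, b (k + (u + 1))⁆ := by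
          rw [← hb, ih, ih, hΛ, smul_zero, sub_zero, add_right_comm, add_assoc]

end LieAlgebra

section Onsager

attribute [local instance 100] LieRing.ofAssociativeRing

open Submodule Set

variable (X Y H : ℤ → A) (j l : ℤ)

theorem Lam1_mem_span_range : Lam1 H j l ∈ span ℂ (range H) :=
  neg_mem (sub_mem (subset_span (mem_range_self _)) (subset_span (mem_range_self _)))

theorem Dm_mem_span_range (hHY : ∀ k l : ℤ, ⁅H k, Y l⁆ = -(2 • (Y (l + k) + Y (l - k))))
    (k : ℕ) : Dm Y H j l k ∈ span ℂ (range Y) := by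
  induction k with
  | zero => exact subset_span (mem_range_self l)
  | succ k ih =>
    refine smul_mem _ _ (lie_mem_span_of_forall_lie_mem_span ?_ ih (Lam1_mem_span_range H j l))
    rintro _ ⟨m, rfl⟩ _ ⟨n, rfl⟩
    rw [← lie_skew, hHY]
    exact neg_mem (neg_mem (nsmul_mem
      (add_mem (subset_span (mem_range_self _)) (subset_span (mem_range_self _))) 2))

theorem lie_X_Dm_mem_span_range (hXY : ∀ j l : ℤ, ⁅X j, Y l⁆ = H (j + l) - H (j - l))
    (hHY : ∀ k l : ℤ, ⁅H k, Y l⁆ = -(2 • (Y (l + k) + Y (l - k)))) (k : ℕ) :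
    ⁅X j, Dm Y H j l k⁆ ∈ span ℂ (range H) := by
  refine lie_mem_span_of_forall_lie_mem_span (s := range X) ?_
    (subset_span (mem_range_self j)) (Dm_mem_span_range Y H j l hHY k)
  rintro _ ⟨m, rfl⟩ _ ⟨n, rfl⟩
  rw [hXY]
  exact sub_mem (subset_span (mem_range_self _)) (subset_span (mem_range_self _))

theorem lie_Lam1_lie_X_Dm (hXY : ∀ j l : ℤ, ⁅X j, Y l⁆ = H (j + l) - H (j - l))
    (hHY : ∀ k l : ℤ, ⁅H k, Y l⁆ = -(2 • (Y (l + k) + Y (l - k))))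
    (hHH : ∀ k m : ℤ, ⁅H k, H m⁆ = 0) (k : ℕ) :
    ⁅Lam1 H j l, ⁅X j, Dm Y H j l k⁆⁆ = 0 :=
  lie_eq_zero_of_forall_lie_eq_zero (R := ℂ) (by rintro _ ⟨m, rfl⟩ _ ⟨n, rfl⟩; exact hHH m n)
    (Lam1_mem_span_range H j l) (lie_X_Dm_mem_span_range X Y H j l hXY hHY k)

theorem Dm_succ (k : ℕ) : Dm Y H j l (k + 1) = ((1 : ℂ) / 2) • ⁅Lam1 H j l, Dm Y H j l k⁆ := by
  rw [Dm, ← lie_skew, smul_neg, neg_smul, neg_neg]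

end Onsager

theorem bracket_Dp_Dm_general (X Y H : ℤ → A)
    (hXY : ∀ j l : ℤ, ⁅X j, Y l⁆ = H (j + l) - H (j - l))
    (hHY : ∀ k l : ℤ, ⁅H k, Y l⁆ = -(2 • (Y (l + k) + Y (l - k))))
    (hHH : ∀ k m : ℤ, ⁅H k, H m⁆ = 0)
    (k u : ℕ) (j l : ℕ+) :
    ⁅Dp X H ((j : ℕ) : ℤ) ((l : ℕ) : ℤ) u, Dm Y H ((j : ℕ) : ℤ) ((l : ℕ) : ℤ) k⁆ =
      pG X Y H ((j : ℕ) : ℤ) ((l : ℕ) : ℤ) (k + u + 1) := by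
  let : LieRing A := LieRing.ofAssociativeRing
  exact lie_eq_lie_zero_of_recursions (Dp X H j l) (Dm Y H j l) (Lam1 H j l) ((1 : ℂ) / 2)
    (fun _ => rfl) (Dm_succ Y H j l) (lie_Lam1_lie_X_Dm X Y H j l hXY hHY hHH) u k

/-- `[D^{Γ,+}_{u,1}(j,l), D^{Γ,-}_{k,1}(j,l)] = p^Γ_{k+u+1}(j,l)`. -/
theorem bracket_Dp_Dm (X Y H : ℤ → A)
    (hXneg : ∀ m : ℤ, X (-m) = -X m) (hX0 : X 0 = 0)
    (hYneg : ∀ m : ℤ, Y (-m) = -Y m) (hY0 : Y 0 = 0)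
    (hHneg : ∀ m : ℤ, H (-m) = H m)
    (hXY : ∀ j l : ℤ, ⁅X j, Y l⁆ = H (j + l) - H (j - l))
    (hHX : ∀ k j : ℤ, ⁅H k, X j⁆ = 2 • (X (j + k) - X (k - j)))
    (hHY : ∀ k l : ℤ, ⁅H k, Y l⁆ = -(2 • (Y (l + k) + Y (l - k))))
    (hHH : ∀ k m : ℤ, ⁅H k, H m⁆ = 0)
    (k u : ℕ) (j l : ℕ+) :
    ⁅Dp X H ((j : ℕ) : ℤ) ((l : ℕ) : ℤ) u, Dm Y H ((j : ℕ) : ℤ) ((l : ℕ) : ℤ) k⁆ =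
      pG X Y H ((j : ℕ) : ℤ) ((l : ℕ) : ℤ) (k + u + 1) :=
  bracket_Dp_Dm_general X Y H hXY hHY hHH k u j l
end
end

section
/- In U(O), for all i,j,k,m ∈ ℕ+: [x_j^{Γ,+}, p_i^Γ(k,m)] = −2 D_i^{Γ,+}(j,k,m), where D_i^{Γ,+}(j,k,m) := Σ_{n=0}^i Σ_{v=0}^i (−1)^{n+v} C(i,n) C(i,v) x^{Γ,+}_{j+(i−2n)k+(i−2v)m}. -/
open Finset

noncomputable section

/- Setting: `A` plays the role of the universal enveloping algebra `U(O)` of the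
Onsager algebra.  `X m = x_m^{Γ,+}`, `Y m = x_m^{Γ,-}`, `H m = h_m^Γ` (indexed by `ℤ`
via the conventions `x_{-m}^{Γ,±} = -x_m^{Γ,±}`, `x_0^{Γ,±} = 0`, `h_{-m}^Γ = h_m^Γ`),
and the Lie brackets of `O` are imposed as commutator relations. -/
variable {A : Type*} [Ring A] [Algebra ℂ A]

/-! Write `x(f)`, `h(f)`, `y(f)` for the `ℤ`-linear extensions of `X`, `H`, `Y` to Laurent
polynomials `f ∈ ℤ[T;T⁻¹]`, so that `x(T^n) = X n`. In this language the defining brackets become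
multiplication operators: `⁅X J, h(f)⁆ = -2 x(T^J (f + f(T⁻¹)))`, `⁅X K, y(f)⁆ = h(T^K (f - f(T⁻¹)))`
and `⁅y(f), Λ_{K,M,1}⁆ = -2 y(f P)` with `P = (T^K - T^{-K})(T^M - T^{-M})`. Hence
`D^{Γ,-}_{u,1}(K,M) = y(T^M P^u)`, and since `P` is invariant under `T ↦ T⁻¹` the two remaining
brackets give `⁅X J, p_i(K,M)⁆ = -2 x(T^J P^i)`; the binomial expansion of `P^i` is the double
sum. -/

open LaurentPolynomial

theorem LaurentPolynomial.T_sub_T_neg_pow {R : Type*} [CommRing R] (K : ℤ) (i : ℕ) :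
    (T K - T (-K) : R[T;T⁻¹]) ^ i =
      ∑ n ∈ range (i + 1), ((-1 : ℤ) ^ n * (i.choose n : ℤ)) • T (((i : ℤ) - 2 * n) * K) := by
  rw [sub_eq_neg_add, add_pow]
  refine sum_congr rfl fun n hn => ?_
  have hn : n ≤ i := Nat.lt_succ_iff.mp (mem_range.mp hn)
  have hexp : (n : ℤ) * -K + ((i - n : ℕ) : ℤ) * K = ((i : ℤ) - 2 * n) * K := by
    push_cast [hn]; ring
  rw [neg_pow, T_pow, T_pow, mul_assoc ((-1) ^ n), ← T_add, hexp, zsmul_eq_mul]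
  push_cast
  ring

@[elab_as_elim]
theorem LaurentPolynomial.induction_on_smul_T {R : Type*} [Semiring R]
    {motive : R[T;T⁻¹] → Prop} (f : R[T;T⁻¹])
    (add : ∀ p q, motive p → motive q → motive (p + q))
    (smul_T : ∀ (a : R) (n : ℤ), motive (a • T n)) : motive f :=
  f.induction_on' add fun n a => smul_eq_C_mul a (T n) ▸ smul_T a n

def lamPoly (K M : ℤ) : ℤ[T;T⁻¹] := (T K - T (-K)) * (T M - T (-M))

section LaurentLift

variable {V : Type*} [AddCommGroup V]

def laurentLift (X : ℤ → V) : ℤ[T;T⁻¹] →ₗ[ℤ] V := (AddMonoidAlgebra.basis ℤ ℤ).constr ℤ X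

@[simp]
theorem laurentLift_T (X : ℤ → V) (n : ℤ) : laurentLift X (T n) = X n :=
  (AddMonoidAlgebra.basis ℤ ℤ).constr_basis ℤ X n

theorem laurentLift_T_mul_lamPoly_pow (X : ℤ → V) (J K M : ℤ) (i : ℕ) :
    laurentLift X (T J * lamPoly K M ^ i) =
      ∑ n ∈ range (i + 1), ∑ v ∈ range (i + 1),
        ((-1 : ℤ) ^ (n + v) * (i.choose n : ℤ) * (i.choose v : ℤ)) •
          X (J + ((i : ℤ) - 2 * n) * K + ((i : ℤ) - 2 * v) * M) := by
  rw [lamPoly, mul_pow, T_sub_T_neg_pow, T_sub_T_neg_pow, sum_mul_sum, mul_sum, map_sum]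
  refine sum_congr rfl fun n _ => ?_
  rw [mul_sum, map_sum]
  refine sum_congr rfl fun v _ => ?_
  rw [smul_mul_smul_comm, mul_smul_comm, ← T_add, ← T_add, map_zsmul, laurentLift_T, pow_add,
    add_assoc]
  congr 1
  ring

end LaurentLift

section OnsagerBrackets

attribute [local instance] LieRing.ofAssociativeRing

variable {U : Type*} [Ring U]

theorem lie_laurentLift_H {X H : ℤ → U} (hXneg : ∀ m : ℤ, X (-m) = -X m)
    (hHX : ∀ k j : ℤ, ⁅H k, X j⁆ = 2 • (X (j + k) - X (k - j))) (J : ℤ) (f : ℤ[T;T⁻¹]) :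
    ⁅X J, laurentLift H f⁆ = -(2 • laurentLift X (T J * (f + invert f))) := by
  induction f using LaurentPolynomial.induction_on_smul_T with
  | add p q hp hq =>
    rw [map_add, lie_add, hp, hq, ← neg_add, ← smul_add, ← map_add, map_add invert]
    congr 3
    ring
  | smul_T a n =>
    rw [map_zsmul, map_zsmul, ← smul_add, mul_smul_comm, map_zsmul, lie_zsmul, smul_comm,
      ← smul_neg]
    congr 1
    rw [laurentLift_T, ← lie_skew, hHX, invert_T, mul_add, ← T_add, ← T_add, map_add,
      laurentLift_T, laurentLift_T, show n - J = -(J + -n) by ring, hXneg]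
    abel

theorem lie_laurentLift_Y {X Y H : ℤ → U} (hXY : ∀ j l : ℤ, ⁅X j, Y l⁆ = H (j + l) - H (j - l))
    (K : ℤ) (f : ℤ[T;T⁻¹]) :
    ⁅X K, laurentLift Y f⁆ = laurentLift H (T K * (f - invert f)) := by
  induction f using LaurentPolynomial.induction_on_smul_T with
  | add p q hp hq =>
    rw [map_add, lie_add, hp, hq, ← map_add, map_add invert]
    congr 1
    ring
  | smul_T a n =>
    rw [map_zsmul, map_zsmul, ← smul_sub, mul_smul_comm, map_zsmul, lie_zsmul, laurentLift_T,
      hXY, invert_T, mul_sub, ← T_add, ← T_add, map_sub, laurentLift_T, laurentLift_T,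
      ← sub_eq_add_neg K n]

theorem laurentLift_lie_Lam1 {Y H : ℤ → U}
    (hHY : ∀ k l : ℤ, ⁅H k, Y l⁆ = -(2 • (Y (l + k) + Y (l - k)))) (K M : ℤ) (f : ℤ[T;T⁻¹]) :
    ⁅laurentLift Y f, Lam1 H K M⁆ = -(2 • laurentLift Y (f * lamPoly K M)) := by
  induction f using LaurentPolynomial.induction_on_smul_T with
  | add p q hp hq =>
    rw [map_add, add_lie, hp, hq, ← neg_add, ← smul_add, ← map_add, add_mul]
  | smul_T a n =>
    rw [map_zsmul, zsmul_lie, smul_mul_assoc, map_zsmul, smul_comm, ← smul_neg]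
    congr 1
    rw [laurentLift_T, Lam1, lie_neg, lie_sub, ← lie_skew, ← lie_skew (Y n), hHY, hHY, lamPoly]
    simp only [mul_sub, sub_mul, ← T_add, map_sub, laurentLift_T]
    rw [show n - (K + M) = n + (-K + -M) by ring, show n + (K - M) = n + (K + -M) by ring,
      show n - (K - M) = n + (-K + M) by ring]
    abel

theorem Dm_eq_laurentLift {Y H : ℤ → U} [Algebra ℂ U]
    (hHY : ∀ k l : ℤ, ⁅H k, Y l⁆ = -(2 • (Y (l + k) + Y (l - k)))) (K M : ℤ) (u : ℕ) :
    Dm Y H K M u = laurentLift Y (T M * lamPoly K M ^ u) := by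
  induction u with
  | zero => rw [pow_zero, mul_one, laurentLift_T, Dm]
  | succ u ih =>
    rw [Dm, ih, laurentLift_lie_Lam1 hHY, pow_succ, mul_assoc, smul_neg,
      ← Nat.cast_smul_eq_nsmul ℂ, smul_smul]
    norm_num

theorem lie_pG_succ {X Y H : ℤ → U} [Algebra ℂ U] (hXneg : ∀ m : ℤ, X (-m) = -X m)
    (hXY : ∀ j l : ℤ, ⁅X j, Y l⁆ = H (j + l) - H (j - l))
    (hHX : ∀ k j : ℤ, ⁅H k, X j⁆ = 2 • (X (j + k) - X (k - j)))
    (hHY : ∀ k l : ℤ, ⁅H k, Y l⁆ = -(2 • (Y (l + k) + Y (l - k)))) (J K M : ℤ) (s : ℕ) :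
    ⁅X J, pG X Y H K M (s + 1)⁆ = -(2 • laurentLift X (T J * lamPoly K M ^ (s + 1))) := by
  rw [pG, Nat.add_sub_cancel, Dm_eq_laurentLift hHY, lie_laurentLift_Y hXY,
    lie_laurentLift_H hXneg hHX]
  congr 4
  simp only [map_mul, map_sub, map_pow, invert_T, neg_neg, lamPoly]
  ring

end OnsagerBrackets

theorem bracket_x_p_general (X Y H : ℤ → A)
    (hXneg : ∀ m : ℤ, X (-m) = -X m)
    (hXY : ∀ j l : ℤ, ⁅X j, Y l⁆ = H (j + l) - H (j - l))
    (hHX : ∀ k j : ℤ, ⁅H k, X j⁆ = 2 • (X (j + k) - X (k - j)))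
    (hHY : ∀ k l : ℤ, ⁅H k, Y l⁆ = -(2 • (Y (l + k) + Y (l - k))))
    (i j k m : ℕ+) :
    ⁅X ((j : ℕ) : ℤ), pG X Y H ((k : ℕ) : ℤ) ((m : ℕ) : ℤ) (i : ℕ)⁆ =
      -(2 • ∑ n ∈ Finset.range ((i : ℕ) + 1), ∑ v ∈ Finset.range ((i : ℕ) + 1),
        ((-1 : ℤ) ^ (n + v) * ((i : ℕ).choose n : ℤ) * ((i : ℕ).choose v : ℤ)) •
          X (((j : ℕ) : ℤ) + (((i : ℕ) : ℤ) - 2 * n) * ((k : ℕ) : ℤ)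
            + (((i : ℕ) : ℤ) - 2 * v) * ((m : ℕ) : ℤ))) := by
  obtain ⟨s, hs⟩ : ∃ s, (i : ℕ) = s + 1 := ⟨_, (Nat.succ_pred_eq_of_pos i.pos).symm⟩
  rw [hs, lie_pG_succ hXneg hXY hHX hHY, laurentLift_T_mul_lamPoly_pow]

/-- `[x_j^{Γ,+}, p_i^Γ(k,m)] = -2 D_i^{Γ,+}(j,k,m)` where
`D_i^{Γ,+}(j,k,m) = ∑_{n,v=0}^i (-1)^{n+v} C(i,n) C(i,v) x^{Γ,+}_{j+(i-2n)k+(i-2v)m}`. -/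
theorem bracket_x_p (X Y H : ℤ → A)
    (hXneg : ∀ m : ℤ, X (-m) = -X m) (hX0 : X 0 = 0)
    (hYneg : ∀ m : ℤ, Y (-m) = -Y m) (hY0 : Y 0 = 0)
    (hHneg : ∀ m : ℤ, H (-m) = H m)
    (hXY : ∀ j l : ℤ, ⁅X j, Y l⁆ = H (j + l) - H (j - l))
    (hHX : ∀ k j : ℤ, ⁅H k, X j⁆ = 2 • (X (j + k) - X (k - j)))
    (hHY : ∀ k l : ℤ, ⁅H k, Y l⁆ = -(2 • (Y (l + k) + Y (l - k))))
    (hHH : ∀ k m : ℤ, ⁅H k, H m⁆ = 0)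
    (i j k m : ℕ+) :
    ⁅X ((j : ℕ) : ℤ), pG X Y H ((k : ℕ) : ℤ) ((m : ℕ) : ℤ) (i : ℕ)⁆ =
      -(2 • ∑ n ∈ Finset.range ((i : ℕ) + 1), ∑ v ∈ Finset.range ((i : ℕ) + 1),
        ((-1 : ℤ) ^ (n + v) * ((i : ℕ).choose n : ℤ) * ((i : ℕ).choose v : ℤ)) •
          X (((j : ℕ) : ℤ) + (((i : ℕ) : ℤ) - 2 * n) * ((k : ℕ) : ℤ)
            + (((i : ℕ) : ℤ) - 2 * v) * ((m : ℕ) : ℤ))) :=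
  bracket_x_p_general X Y H hXneg hXY hHX hHY i j k m
end
end

section
/- In U(O), for all m ∈ ℕ+, u ∈ ℤ≥0, and j,l ∈ ℕ+: [p_m^Γ(j,l), D_{u,1}^{Γ,+}(j,l)] = 2 D_{m+u,1}^{Γ,+}(j,l). -/
open Finset

noncomputable section

/- Setting: `A` plays the role of the universal enveloping algebra `U(O)` of the
Onsager algebra.  `X m = x_m^{Γ,+}`, `Y m = x_m^{Γ,-}`, `H m = h_m^Γ` (indexed by `ℤ`
via the conventions `x_{-m}^{Γ,±} = -x_m^{Γ,±}`, `x_0^{Γ,±} = 0`, `h_{-m}^Γ = h_m^Γ`),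
and the Lie brackets of `O` are imposed as commutator relations. -/
variable {A : Type*} [Ring A] [Algebra ℂ A]

/-! Encode `ℤ`-linear combinations of the `X n` (and likewise of the `Y n`, `H n`) by Laurent
polynomials: `ev X (∑ cₙ Tⁿ) = ∑ cₙ • X n`. In this model the defining relations become
multiplicative: writing `f̄` for `f(T⁻¹)`,
`⁅ev H f, ev X g⁆ = 2 • ev X ((f + f̄) g)`, `⁅ev H f, ev Y g⁆ = -2 • ev Y ((f + f̄) g)` and
`⁅ev X f, ev Y g⁆ = ev H (f g - f ḡ)`.
Since `Λ_{j,l,1} = ev H λ` with `λ = T^{j-l} - T^{j+l}`, each recursion step of `D^{Γ,±}_{u,1}`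
multiplies by `q = -(λ + λ̄)`, so `D^{Γ,+}_{u,1} = ev X (qᵘ Tʲ)`, `D^{Γ,-}_{u,1} = ev Y (qᵘ Tˡ)`,
and `p_{n+1} = ev H (-qⁿ λ)`. As `q̄ = q`, bracketing with `p_{n+1}` multiplies by `2 q^{n+1}`. -/

open LaurentPolynomial

namespace Onsager

-- The commutator bracket of a ring is not a global `LieRing` instance.
attribute [local instance] LieRing.ofAssociativeRing

theorem half_smul_two_nsmul {M : Type*} [AddCommGroup M] [Module ℂ M] (a : M) :
    ((1 : ℂ) / 2) • (2 • a) = a := by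
  rw [one_div, ← ofNat_smul_eq_nsmul ℂ, inv_smul_smul₀ two_ne_zero]

def lam1Poly (j l : ℤ) : ℤ[T;T⁻¹] := T (j - l) - T (j + l)

def qPoly (j l : ℤ) : ℤ[T;T⁻¹] := -(lam1Poly j l + invert (lam1Poly j l))

theorem lam1Poly_add_invert (j l : ℤ) : lam1Poly j l + invert (lam1Poly j l) = -qPoly j l := by
  rw [qPoly, neg_neg]

theorem invert_qPoly (j l : ℤ) : invert (qPoly j l) = qPoly j l := by
  rw [qPoly, map_neg, map_add, involutive_invert, add_comm]

section Model

variable {R : Type*} [Ring R]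

def ev (F : ℤ → R) : ℤ[T;T⁻¹] →+ R :=
  AddMonoidAlgebra.liftNC (Int.castAddHom R) fun n => F n.toAdd

theorem ev_C_mul_T (F : ℤ → R) (c n : ℤ) : ev F (C c * T n) = c • F n := by
  rw [← single_eq_C_mul_T, ev, AddMonoidAlgebra.liftNC_single, zsmul_eq_mul]
  rfl

theorem ev_T (F : ℤ → R) (n : ℤ) : ev F (T n) = F n := by
  simpa using ev_C_mul_T F 1 n

theorem ev_C_mul_T_mul_C_mul_T (F : ℤ → R) (c d a b : ℤ) :
    ev F (C c * T a * (C d * T b)) = (c * d) • F (a + b) := by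
  rw [← ev_C_mul_T, map_mul C, T_add, mul_mul_mul_comm]

variable {X Y H : ℤ → R}

theorem lie_ev_X_ev_Y (hXY : ∀ j l : ℤ, ⁅X j, Y l⁆ = H (j + l) - H (j - l))
    (f g : ℤ[T;T⁻¹]) : ⁅ev X f, ev Y g⁆ = ev H (f * g - f * invert g) := by
  induction f using LaurentPolynomial.induction_on' with
  | add f f' hf hf' => simp only [map_add, map_sub, add_lie, add_mul, hf, hf']; abel
  | C_mul_T a c =>
    induction g using LaurentPolynomial.induction_on' with
    | add g g' hg hg' => simp only [map_add, map_sub, lie_add, mul_add, hg, hg']; abel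
    | C_mul_T b d =>
      simp only [ev_C_mul_T, zsmul_lie, lie_zsmul, hXY, map_mul, invert_C, invert_T, map_sub,
        ev_C_mul_T_mul_C_mul_T, ← sub_eq_add_neg]
      module

theorem lie_ev_H_ev_X (hXneg : ∀ m : ℤ, X (-m) = -X m)
    (hHX : ∀ k j : ℤ, ⁅H k, X j⁆ = 2 • (X (j + k) - X (k - j))) (f g : ℤ[T;T⁻¹]) :
    ⁅ev H f, ev X g⁆ = 2 • ev X ((f + invert f) * g) := by
  induction f using LaurentPolynomial.induction_on' with
  | add f f' hf hf' => simp only [map_add, add_lie, add_mul, smul_add, hf, hf']; abel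
  | C_mul_T a c =>
    induction g using LaurentPolynomial.induction_on' with
    | add g g' hg hg' => simp only [map_add, lie_add, mul_add, smul_add, hg, hg']
    | C_mul_T b d =>
      have hX : X (a - b) = -X (-a + b) := by rw [← hXneg]; congr 1; ring
      simp only [ev_C_mul_T, zsmul_lie, lie_zsmul, hHX, map_mul, invert_C, invert_T, map_add,
        add_mul, ev_C_mul_T_mul_C_mul_T, hX]
      rw [add_comm a b]
      module

theorem lie_ev_H_ev_Y (hHY : ∀ k l : ℤ, ⁅H k, Y l⁆ = -(2 • (Y (l + k) + Y (l - k))))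
    (f g : ℤ[T;T⁻¹]) : ⁅ev H f, ev Y g⁆ = -(2 • ev Y ((f + invert f) * g)) := by
  induction f using LaurentPolynomial.induction_on' with
  | add f f' hf hf' => simp only [map_add, add_lie, add_mul, smul_add, neg_add, hf, hf']; abel
  | C_mul_T a c =>
    induction g using LaurentPolynomial.induction_on' with
    | add g g' hg hg' => simp only [map_add, lie_add, mul_add, smul_add, neg_add, hg, hg']
    | C_mul_T b d =>
      simp only [ev_C_mul_T, zsmul_lie, lie_zsmul, hHY, map_mul, invert_C, invert_T, map_add,
        add_mul, ev_C_mul_T_mul_C_mul_T]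
      rw [add_comm a b, ← sub_eq_neg_add]
      module

theorem Lam1_eq_ev (j l : ℤ) : Lam1 H j l = ev H (lam1Poly j l) := by
  rw [Lam1, lam1Poly, map_sub, ev_T, ev_T, neg_sub]

end Model

section

variable {X Y H : ℤ → A} (j l : ℤ)

theorem Dp_eq_ev (hXneg : ∀ m : ℤ, X (-m) = -X m)
    (hHX : ∀ k j : ℤ, ⁅H k, X j⁆ = 2 • (X (j + k) - X (k - j))) (u : ℕ) :
    Dp X H j l u = ev X (qPoly j l ^ u * T j) := by
  induction u with
  | zero => rw [Dp, pow_zero, one_mul, ev_T]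
  | succ u ih =>
    rw [Dp, ih, Lam1_eq_ev, ← lie_skew, lie_ev_H_ev_X hXneg hHX, lam1Poly_add_invert, neg_mul,
      map_neg]
    simp only [smul_neg, neg_neg, half_smul_two_nsmul]
    rw [pow_succ', mul_assoc]

theorem Dm_eq_ev (hHY : ∀ k l : ℤ, ⁅H k, Y l⁆ = -(2 • (Y (l + k) + Y (l - k)))) (u : ℕ) :
    Dm Y H j l u = ev Y (qPoly j l ^ u * T l) := by
  induction u with
  | zero => rw [Dm, pow_zero, one_mul, ev_T]
  | succ u ih =>
    rw [Dm, ih, Lam1_eq_ev, ← lie_skew, lie_ev_H_ev_Y hHY, lam1Poly_add_invert, neg_mul,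
      map_neg]
    simp only [smul_neg, neg_smul, neg_neg, half_smul_two_nsmul]
    rw [pow_succ', mul_assoc]

theorem pG_succ_eq_ev (hXY : ∀ j l : ℤ, ⁅X j, Y l⁆ = H (j + l) - H (j - l))
    (hHY : ∀ k l : ℤ, ⁅H k, Y l⁆ = -(2 • (Y (l + k) + Y (l - k)))) (n : ℕ) :
    pG X Y H j l (n + 1) = ev H (-(qPoly j l ^ n * lam1Poly j l)) := by
  rw [pG, Nat.add_sub_cancel, Dm_eq_ev j l hHY, ← ev_T X, lie_ev_X_ev_Y hXY]
  congr 1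
  rw [map_mul, map_pow, invert_qPoly, invert_T, lam1Poly, T_add, T_sub]
  ring

theorem lie_pG_succ_Dp (hXneg : ∀ m : ℤ, X (-m) = -X m)
    (hXY : ∀ j l : ℤ, ⁅X j, Y l⁆ = H (j + l) - H (j - l))
    (hHX : ∀ k j : ℤ, ⁅H k, X j⁆ = 2 • (X (j + k) - X (k - j)))
    (hHY : ∀ k l : ℤ, ⁅H k, Y l⁆ = -(2 • (Y (l + k) + Y (l - k)))) (n u : ℕ) :
    ⁅pG X Y H j l (n + 1), Dp X H j l u⁆ = 2 • Dp X H j l (n + 1 + u) := by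
  rw [pG_succ_eq_ev j l hXY hHY, Dp_eq_ev j l hXneg hHX, Dp_eq_ev j l hXneg hHX,
    lie_ev_H_ev_X hXneg hHX, map_neg, map_mul invert, map_pow, invert_qPoly, ← neg_add, ← mul_add,
    lam1Poly_add_invert]
  congr 2
  ring

end

end Onsager

theorem bracket_p_Dp_general (X Y H : ℤ → A)
    (hXneg : ∀ m : ℤ, X (-m) = -X m)
    (hXY : ∀ j l : ℤ, ⁅X j, Y l⁆ = H (j + l) - H (j - l))
    (hHX : ∀ k j : ℤ, ⁅H k, X j⁆ = 2 • (X (j + k) - X (k - j)))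
    (hHY : ∀ k l : ℤ, ⁅H k, Y l⁆ = -(2 • (Y (l + k) + Y (l - k))))
    (m : ℕ) (hm : 1 ≤ m) (u : ℕ) (j l : ℕ+) :
    ⁅pG X Y H ((j : ℕ) : ℤ) ((l : ℕ) : ℤ) m, Dp X H ((j : ℕ) : ℤ) ((l : ℕ) : ℤ) u⁆ =
      2 • Dp X H ((j : ℕ) : ℤ) ((l : ℕ) : ℤ) (m + u) := by
  obtain ⟨n, rfl⟩ := Nat.exists_eq_add_of_le' hm
  exact Onsager.lie_pG_succ_Dp _ _ hXneg hXY hHX hHY n u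

/-- `[p_m^Γ(j,l), D^{Γ,+}_{u,1}(j,l)] = 2 D^{Γ,+}_{m+u,1}(j,l)`. -/
theorem bracket_p_Dp (X Y H : ℤ → A)
    (hXneg : ∀ m : ℤ, X (-m) = -X m) (hX0 : X 0 = 0)
    (hYneg : ∀ m : ℤ, Y (-m) = -Y m) (hY0 : Y 0 = 0)
    (hHneg : ∀ m : ℤ, H (-m) = H m)
    (hXY : ∀ j l : ℤ, ⁅X j, Y l⁆ = H (j + l) - H (j - l))
    (hHX : ∀ k j : ℤ, ⁅H k, X j⁆ = 2 • (X (j + k) - X (k - j)))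
    (hHY : ∀ k l : ℤ, ⁅H k, Y l⁆ = -(2 • (Y (l + k) + Y (l - k))))
    (hHH : ∀ k m : ℤ, ⁅H k, H m⁆ = 0)
    (m : ℕ) (hm : 1 ≤ m) (u : ℕ) (j l : ℕ+) :
    ⁅pG X Y H ((j : ℕ) : ℤ) ((l : ℕ) : ℤ) m, Dp X H ((j : ℕ) : ℤ) ((l : ℕ) : ℤ) u⁆ =
      2 • Dp X H ((j : ℕ) : ℤ) ((l : ℕ) : ℤ) (m + u) :=
  bracket_p_Dp_general X Y H hXneg hXY hHX hHY m hm u j l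
end
end
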